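/- For all integers $n \geq 1$, the $\mathbb{F}_3$-dimension of the ring $\mathbb{F}_3[X,Y,Z,W]/\big((X,Y,Z)^n + (X,Y,Z,W)^{n+1} + (X^4+Y^4+Z^4+W^4)\big)$ equals $4\binom{n+2}{3} - 3\binom{n+1}{2} + n$. -/

import Mathlib

/-!
Write `M = (X₀, X₁, X₂)ⁿ + 𝔪ⁿ⁺¹` and `f = X₀⁴ + X₁⁴ + X₂⁴ + X₃⁴`. Multiplication by `f` gives the
exact sequence `0 → R/(M : f) → R/M → R/(M + (f)) → 0`, so it suffices to know `R/M` and `(M : f)`.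
Since `M` is a monomial ideal, the monomials outside `M` form a basis of `R/M`: these are the
monomials of degree `≤ n` except the `C(n+2, 2)` monomials of degree `n` in `X₀, X₁, X₂`.
The colon ideal is `(M : f) = 𝔪ⁿ⁻³`: if `g` has a nonzero part `g₀` of degree `< n - 3`, the term
`X₃⁴ X^μ` of `f g₀`, with `μ` of maximal `X₃`-degree in `g₀`, cannot cancel and lies outside `M`.
Hence `dim R/(M + (f)) = C(n+4, 4) - C(n+2, 2) - C(n, 4)`.
-/

open Finset MvPolynomial

theorem Ideal.finrank_quotient_sup_span_singleton_add_finrank_quotient_colon {K A : Type*}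
    [Field K] [CommRing A] [Algebra K A] (I : Ideal A) (f : A) [Module.Finite K (A ⧸ I)] :
    Module.finrank K (A ⧸ (I ⊔ Ideal.span {f})) + Module.finrank K (A ⧸ I.colon {f}) =
      Module.finrank K (A ⧸ I) := by
  let φ : A →ₗ[K] A ⧸ I.restrictScalars K := (I.restrictScalars K).mkQ ∘ₗ LinearMap.mulLeft K f
  have hker : LinearMap.ker φ = (I.colon {f}).restrictScalars K := by
    ext g
    simp [φ, Submodule.mem_colon_singleton, mul_comm]
  have hrange :
      LinearMap.range φ = ((Ideal.span {f}).restrictScalars K).map (I.restrictScalars K).mkQ := by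
    rw [LinearMap.range_comp]
    congr 1
    ext g
    simp [Ideal.mem_span_singleton', mul_comm, eq_comm]
  have : Module.Finite K (A ⧸ I.restrictScalars K) :=
    .equiv (Submodule.Quotient.restrictScalarsEquiv K I).symm
  have hsum := (LinearMap.range φ).finrank_quotient_add_finrank
  rw [hrange, (Submodule.quotientQuotientEquivQuotientSup _ _).finrank_eq,
    ← hrange, ← φ.quotKerEquivRange.finrank_eq, hker,
    ← Submodule.restrictScalars_sup] at hsum
  simpa only [(Submodule.Quotient.restrictScalarsEquiv K _).finrank_eq] using hsum

namespace Finsupp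

variable {σ : Type*}

theorem isUpperSet_setOf_le_sum (s : Finset σ) (n : ℕ) :
    IsUpperSet {μ : σ →₀ ℕ | n ≤ ∑ i ∈ s, μ i} :=
  fun _ _ hle h => h.trans (Finset.sum_le_sum fun i _ => hle i)

theorem ncard_degree_preimage_Iio [Fintype σ] [Nonempty σ] (k : ℕ) :
    (degree ⁻¹' Set.Iio k : Set (σ →₀ ℕ)).ncard =
      (k + Fintype.card σ - 1).choose (Fintype.card σ) := by
  classical
  have hset : (degree ⁻¹' Set.Iio k : Set (σ →₀ ℕ)) =
      ↑((range k).biUnion fun j => (univ : Finset σ).finsuppAntidiag j) := by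
    ext μ
    simp [degree_eq_sum]
  have hdisj :
      (↑(range k) : Set ℕ).PairwiseDisjoint fun j => (univ : Finset σ).finsuppAntidiag j := by
    intro i _ j _ hij
    simp only [Function.onFun, disjoint_left, mem_finsuppAntidiag]
    exact fun μ hi hj => hij (hi.1.symm.trans hj.1)
  obtain ⟨m, hm⟩ : ∃ m, Fintype.card σ = m + 1 := Nat.exists_eq_add_one.2 Fintype.card_pos
  rw [hset, Set.ncard_coe_finset, card_biUnion hdisj]
  simp only [card_finsuppAntidiag_nat_eq_choose, card_univ, hm]
  rcases k with _ | k
  · simp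
  · rw [show k + 1 + (m + 1) - 1 = k + m + 1 by omega, ← Nat.sum_range_add_choose]
    refine Finset.sum_congr rfl fun j _ => ?_
    rw [show m + 1 + j - 1 = j + m by omega, Nat.choose_symm_add]

theorem support_subset_zero_one_two_iff {μ : Fin 4 →₀ ℕ} :
    μ.support ⊆ {0, 1, 2} ↔ μ 3 = 0 := by
  rw [← Finset.coe_subset, support_subset_iff]
  simp [Fin.forall_fin_succ]

end Finsupp

namespace MvPolynomial

variable {σ R K : Type*}

section CommSemiring

variable [CommSemiring R]

theorem mem_restrictSupportIdeal {s : Set (σ →₀ ℕ)} {hs : IsUpperSet s} {p : MvPolynomial σ R} :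
    p ∈ restrictSupportIdeal R s hs ↔ ↑p.support ⊆ s :=
  Iff.rfl

theorem restrictSupportIdeal_eq_span (s : Set (σ →₀ ℕ)) (hs : IsUpperSet s) :
    restrictSupportIdeal R s hs = Ideal.span ((monomial · 1) '' s) := by
  apply le_antisymm
  · rw [← Submodule.restrictScalars_le R, restrictScalars_restrictSupportIdeal,
      restrictSupport_eq_span, Submodule.span_le]
    exact Ideal.subset_span
  · rw [Ideal.span_le, Set.image_subset_iff]
    exact fun μ hμ => (monomial_mem_restrictSupport R).2 (.inl hμ)

theorem restrictSupportIdeal_sup {s t : Set (σ →₀ ℕ)} (hs : IsUpperSet s) (ht : IsUpperSet t) :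
    restrictSupportIdeal R s hs ⊔ restrictSupportIdeal R t ht =
      restrictSupportIdeal R (s ∪ t) (hs.union ht) := by
  simp only [restrictSupportIdeal_eq_span, Set.image_union, Ideal.span_union]

theorem span_X_image_pow (s : Finset σ) (n : ℕ) :
    Ideal.span (X '' ↑s) ^ n =
      restrictSupportIdeal R {μ | n ≤ ∑ i ∈ s, μ i} (Finsupp.isUpperSet_setOf_le_sum s n) := by
  apply le_antisymm
  · induction n with
    | zero => simp [Ideal.one_eq_top, SetLike.le_def, mem_restrictSupportIdeal]
    | succ n ih =>
      rw [pow_succ, Ideal.mul_le]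
      intro p hp q hq
      have hq' : ∀ ν ∈ q.support, 1 ≤ ∑ i ∈ s, ν i := fun ν hν => by
        obtain ⟨i, hi, hνi⟩ := mem_ideal_span_X_image.1 hq ν hν
        exact (Nat.one_le_iff_ne_zero.2 hνi).trans (single_le_sum (fun _ _ => Nat.zero_le _) hi)
      classical
      intro μ hμ
      obtain ⟨a, ha, b, hb, rfl⟩ := mem_add.1 (support_mul p q hμ)
      have ha' := ih hp ha
      have hb' := hq' b hb
      simp only [Set.mem_ofPred_eq, Finsupp.coe_add, Pi.add_apply, sum_add_distrib] at ha' ⊢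
      omega
  · rw [restrictSupportIdeal_eq_span, Ideal.span_le, Set.image_subset_iff]
    induction n with
    | zero => simp
    | succ n ih =>
      intro μ hμ
      obtain ⟨i, hi, hμi⟩ :=
        exists_ne_zero_of_sum_ne_zero (Nat.one_le_iff_ne_zero.1 (le_of_add_le_right hμ))
      obtain ⟨ν, rfl⟩ : ∃ ν, μ = ν + Finsupp.single i 1 :=
        ⟨μ - Finsupp.single i 1, (tsub_add_cancel_of_le (by simpa [Nat.one_le_iff_ne_zero])).symm⟩
      have hν : n ≤ ∑ j ∈ s, ν j := by
        have hsingle : ∑ j ∈ s, Finsupp.single i 1 j = 1 := by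
          rw [sum_eq_single_of_mem i hi fun j _ hj => Finsupp.single_eq_of_ne hj]
          exact Finsupp.single_eq_same
        simp only [Set.mem_ofPred_eq, Finsupp.coe_add, Pi.add_apply, sum_add_distrib,
          hsingle] at hμ
        omega
      rw [Set.mem_preimage, ← mul_one (1 : R), ← monomial_mul, pow_succ, ← X]
      exact Ideal.mul_mem_mul (ih hν) (Ideal.subset_span ⟨i, hi, rfl⟩)

theorem isCompl_restrictSupport_compl (s : Set (σ →₀ ℕ)) :
    IsCompl (restrictSupport R s) (restrictSupport R sᶜ) := by
  constructor
  · rw [Submodule.disjoint_def]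
    intro p hs hsc
    rw [← support_eq_empty, ← coe_eq_empty, ← Set.subset_empty_iff, ← Set.inter_compl_self s]
    exact Set.subset_inter hs hsc
  · rw [codisjoint_iff, restrictSupport_eq_span, restrictSupport_eq_span, ← Submodule.span_union,
      ← Set.image_union, Set.union_compl_self, ← restrictSupport_eq_span, restrictSupport_univ]

end CommSemiring

theorem add_mem_support_mul_of_forall_lt [CommSemiring R] [NoZeroDivisors R]
    {p g : MvPolynomial σ R} (i : σ) {ν : σ →₀ ℕ} (hν : ν ∈ p.support)
    (hν_max : ∀ ν' ∈ p.support, ν' ≠ ν → ν' i < ν i) (hg : g ≠ 0) :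
    ∃ μ ∈ g.support, ν + μ ∈ (p * g).support := by
  obtain ⟨μ, hμ, hμ_max⟩ := g.support.exists_max_image (· i) (support_nonempty.2 hg)
  have hunique : UniqueAdd p.support g.support ν μ := by
    intro a b ha hb hab
    have hai : a i + b i = ν i + μ i := by simpa using congr($hab i)
    obtain rfl : a = ν := by
      by_contra hne
      have := hν_max a ha hne
      have := hμ_max b hb
      omega
    exact ⟨rfl, add_left_cancel hab⟩
  refine ⟨μ, hμ, ?_⟩
  rw [mem_support_iff] at hν hμ ⊢
  rw [show coeff (ν + μ) (p * g) = coeff ν p * coeff μ g from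
    AddMonoidAlgebra.coeff_mul_add_of_uniqueAdd hunique]
  exact mul_ne_zero hν hμ

section Field

variable [Field K]

theorem finrank_quotient_restrictSupportIdeal (s : Set (σ →₀ ℕ)) (hs : IsUpperSet s) :
    Module.finrank K (MvPolynomial σ K ⧸ restrictSupportIdeal K s hs) = sᶜ.ncard := by
  rw [← (Submodule.Quotient.restrictScalarsEquiv K _).finrank_eq,
    (((restrictSupportIdeal K s hs).restrictScalars K).quotientEquivOfIsCompl _
      (isCompl_restrictSupport_compl s)).finrank_eq,
    Module.finrank_eq_nat_card_basis (basisRestrictSupport K sᶜ), Nat.card_coe_set_eq]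

theorem finite_quotient_restrictSupportIdeal {s : Set (σ →₀ ℕ)} (hs : IsUpperSet s)
    (hsc : sᶜ.Finite) : Module.Finite K (MvPolynomial σ K ⧸ restrictSupportIdeal K s hs) :=
  have := hsc.to_subtype
  have := Module.Finite.of_basis (basisRestrictSupport K sᶜ)
  .equiv <| (((restrictSupportIdeal K s hs).restrictScalars K).quotientEquivOfIsCompl _
    (isCompl_restrictSupport_compl s)).symm.trans (Submodule.Quotient.restrictScalarsEquiv K _)

theorem finrank_quotient_idealOfVars_pow [Fintype σ] [Nonempty σ] (k : ℕ) :
    Module.finrank K (MvPolynomial σ K ⧸ idealOfVars σ K ^ k) =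
      (k + Fintype.card σ - 1).choose (Fintype.card σ) := by
  rw [pow_idealOfVars, finrank_quotient_restrictSupportIdeal, ← Set.preimage_compl, Set.compl_Ici,
    Finsupp.ncard_degree_preimage_Iio]

end Field

section FourVariables

theorem span_X_fin_four_eq_idealOfVars [CommSemiring K] :
    Ideal.span {(X 0 : MvPolynomial (Fin 4) K), X 1, X 2, X 3} = idealOfVars (Fin 4) K := by
  rw [idealOfVars]
  congr 1
  ext p
  simp [Fin.exists_fin_succ, eq_comm]

theorem span_pow_sup_idealOfVars_pow [CommSemiring K] (n : ℕ) :
    Ideal.span {(X 0 : MvPolynomial (Fin 4) K), X 1, X 2} ^ n ⊔ idealOfVars (Fin 4) K ^ (n + 1) =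
      restrictSupportIdeal K
        ({μ | n ≤ ∑ i ∈ {0, 1, 2}, μ i} ∪ Finsupp.degree ⁻¹' Set.Ici (n + 1))
        ((Finsupp.isUpperSet_setOf_le_sum _ n).union
          ((isUpperSet_Ici _).preimage Finsupp.degree_mono)) := by
  have hXYZ : ({X 0, X 1, X 2} : Set (MvPolynomial (Fin 4) K)) =
      X '' ↑({0, 1, 2} : Finset (Fin 4)) := by
    simp [Set.image_insert_eq]
  rw [hXYZ, span_X_image_pow, pow_idealOfVars, restrictSupportIdeal_sup]

theorem compl_setOf_le_sum_union_degree_preimage_Ici (n : ℕ) :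
    ({μ : Fin 4 →₀ ℕ | n ≤ ∑ i ∈ {0, 1, 2}, μ i} ∪ Finsupp.degree ⁻¹' Set.Ici (n + 1))ᶜ =
      Finsupp.degree ⁻¹' Set.Iio (n + 1) \ ↑(({0, 1, 2} : Finset (Fin 4)).finsuppAntidiag n) := by
  ext μ
  simp [Finsupp.degree_eq_sum, Fin.sum_univ_four, Finsupp.support_subset_zero_one_two_iff]
  omega

theorem finrank_quotient_span_pow_sup_idealOfVars_pow [Field K] (n : ℕ) :
    Module.finrank K (MvPolynomial (Fin 4) K ⧸
      (Ideal.span {(X 0 : MvPolynomial (Fin 4) K), X 1, X 2} ^ n ⊔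
        idealOfVars (Fin 4) K ^ (n + 1))) = (n + 4).choose 4 - (n + 2).choose 2 := by
  rw [span_pow_sup_idealOfVars_pow, finrank_quotient_restrictSupportIdeal,
    compl_setOf_le_sum_union_degree_preimage_Ici, Set.ncard_sdiff,
    Finsupp.ncard_degree_preimage_Iio, Set.ncard_coe_finset, card_finsuppAntidiag_nat_eq_choose]
  · rw [Fintype.card_fin, show #({0, 1, 2} : Finset (Fin 4)) = 3 from rfl,
      show 3 + n - 1 = n + 2 by omega, show n + 1 + 4 - 1 = n + 4 by omega, Nat.choose_symm_add]
  · intro μ hμ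
    simp [Finsupp.degree_eq_sum, Fin.sum_univ_four, Finsupp.support_subset_zero_one_two_iff]
      at hμ ⊢
    omega

theorem finite_quotient_span_pow_sup_idealOfVars_pow [Field K] (n : ℕ) :
    Module.Finite K (MvPolynomial (Fin 4) K ⧸
      (Ideal.span {(X 0 : MvPolynomial (Fin 4) K), X 1, X 2} ^ n ⊔
        idealOfVars (Fin 4) K ^ (n + 1))) := by
  rw [span_pow_sup_idealOfVars_pow]
  refine finite_quotient_restrictSupportIdeal _ ((Finsupp.finite_of_degree_lt (n + 1)).subset ?_)
  rw [compl_setOf_le_sum_union_degree_preimage_Ici]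
  exact Set.sdiff_subset

theorem colon_sum_X_pow [CommRing K] [IsDomain K] {d : ℕ} (hd : 0 < d) (n : ℕ) :
    (Ideal.span {(X 0 : MvPolynomial (Fin 4) K), X 1, X 2} ^ n ⊔
        idealOfVars (Fin 4) K ^ (n + 1)).colon {X 0 ^ d + X 1 ^ d + X 2 ^ d + X 3 ^ d} =
      idealOfVars (Fin 4) K ^ (n + 1 - d) := by
  set f : MvPolynomial (Fin 4) K := X 0 ^ d + X 1 ^ d + X 2 ^ d + X 3 ^ d
  have hf : f ∈ idealOfVars (Fin 4) K ^ d := by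
    have hX : ∀ i, (X i : MvPolynomial (Fin 4) K) ^ d ∈ idealOfVars (Fin 4) K ^ d :=
      fun i => Ideal.pow_mem_pow (Ideal.subset_span (Set.mem_range_self i)) d
    exact add_mem (add_mem (add_mem (hX 0) (hX 1)) (hX 2)) (hX 3)
  have hf_lead : Finsupp.single 3 d ∈ f.support ∧
      ∀ ν ∈ f.support, ν ≠ Finsupp.single 3 d → ν 3 < Finsupp.single (3 : Fin 4) d 3 := by
    constructor
    · simp [f, mem_support_iff, coeff_X_pow, Finsupp.single_left_inj hd.ne']
    · intro ν hν hne
      rw [Finsupp.single_eq_same]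
      by_contra! h
      have hne' : ∀ i : Fin 4, i ≠ 3 → Finsupp.single i d ≠ ν := by
        rintro i hi rfl
        rw [Finsupp.single_eq_of_ne hi.symm] at h
        omega
      simp [f, mem_support_iff, coeff_X_pow, hne' 0, hne' 1, hne' 2, Ne.symm hne] at hν
  have hmul : ∀ g ∈ idealOfVars (Fin 4) K ^ (n + 1 - d), g * f ∈
      Ideal.span {(X 0 : MvPolynomial (Fin 4) K), X 1, X 2} ^ n ⊔ idealOfVars (Fin 4) K ^ (n + 1) :=
    fun g hg => Ideal.mem_sup_right <|
      Ideal.pow_le_pow_right (show n + 1 ≤ n + 1 - d + d by omega)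
        (by rw [pow_add]; exact Ideal.mul_mem_mul hg hf)
  apply le_antisymm
  · intro g hg
    rw [Submodule.mem_colon_singleton, smul_eq_mul] at hg
    obtain ⟨g₁, hg₁, g₀, hg₀, rfl⟩ := Submodule.mem_sup.1 <|
      (isCompl_restrictSupport_compl (R := K)
        (Finsupp.degree ⁻¹' Set.Ici (n + 1 - d))).codisjoint.eq_top ▸ Submodule.mem_top (x := g)
    have hg₁' : g₁ ∈ idealOfVars (Fin 4) K ^ (n + 1 - d) := by rwa [pow_idealOfVars]
    suffices g₀ = 0 by rwa [this, add_zero]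
    have hg₀f := Ideal.sub_mem _ hg (hmul g₁ hg₁')
    rw [add_mul, add_sub_cancel_left, mul_comm, span_pow_sup_idealOfVars_pow,
      mem_restrictSupportIdeal] at hg₀f
    by_contra hg₀_ne
    obtain ⟨μ, hμ, hμf⟩ := add_mem_support_mul_of_forall_lt 3 hf_lead.1 hf_lead.2 hg₀_ne
    have hμ_deg := hg₀ hμ
    have hfμ := hg₀f hμf
    simp [Finsupp.degree_eq_sum, Fin.sum_univ_four] at hμ_deg hfμ
    omega
  · intro g hg
    simpa [Submodule.mem_colon_singleton] using hmul g hg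

end FourVariables

end MvPolynomial

theorem Nat.add_four_choose_four_sub_add_two_choose_two_sub_choose_four (n : ℕ) :
    (n + 4).choose 4 - (n + 2).choose 2 - n.choose 4 =
      4 * (n + 2).choose 3 - 3 * (n + 1).choose 2 + n := by
  simp only [Nat.choose_succ_succ', Nat.choose_zero_right, Nat.choose_one_right, Nat.reduceAdd]
  omega

open MvPolynomial in
theorem stmt_17_general (n : ℕ) :
    Module.finrank (ZMod 3) (MvPolynomial (Fin 4) (ZMod 3) ⧸
        ((Ideal.span {(X 0 : MvPolynomial (Fin 4) (ZMod 3)), X 1, X 2}) ^ n ⊔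
          (Ideal.span {(X 0 : MvPolynomial (Fin 4) (ZMod 3)), X 1, X 2, X 3}) ^ (n + 1) ⊔
          Ideal.span {(X 0 : MvPolynomial (Fin 4) (ZMod 3)) ^ 4 + X 1 ^ 4 + X 2 ^ 4 + X 3 ^ 4}))
      = 4 * Nat.choose (n + 2) 3 - 3 * Nat.choose (n + 1) 2 + n := by
  have := finite_quotient_span_pow_sup_idealOfVars_pow (K := ZMod 3) n
  have h := Ideal.finrank_quotient_sup_span_singleton_add_finrank_quotient_colon (K := ZMod 3)
    (Ideal.span {X 0, X 1, X 2} ^ n ⊔ idealOfVars (Fin 4) (ZMod 3) ^ (n + 1))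
    (X 0 ^ 4 + X 1 ^ 4 + X 2 ^ 4 + X 3 ^ 4)
  rw [colon_sum_X_pow four_pos, finrank_quotient_idealOfVars_pow,
    finrank_quotient_span_pow_sup_idealOfVars_pow, Fintype.card_fin] at h
  have hchoose : (n + 1 - 4 + 4 - 1).choose 4 = n.choose 4 := by
    rcases le_or_gt 3 n with h3 | h3
    · congr 1; omega
    · rw [Nat.choose_eq_zero_of_lt (by omega), Nat.choose_eq_zero_of_lt (by omega)]
  rw [span_X_fin_four_eq_idealOfVars]
  have := Nat.add_four_choose_four_sub_add_two_choose_two_sub_choose_four n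
  omega

open MvPolynomial in
theorem stmt_17 (n : ℕ) (hn : 1 ≤ n) :
    Module.finrank (ZMod 3) (MvPolynomial (Fin 4) (ZMod 3) ⧸
        ((Ideal.span {(X 0 : MvPolynomial (Fin 4) (ZMod 3)), X 1, X 2}) ^ n ⊔
          (Ideal.span {(X 0 : MvPolynomial (Fin 4) (ZMod 3)), X 1, X 2, X 3}) ^ (n + 1) ⊔
          Ideal.span {(X 0 : MvPolynomial (Fin 4) (ZMod 3)) ^ 4 + X 1 ^ 4 + X 2 ^ 4 + X 3 ^ 4}))
      = 4 * Nat.choose (n + 2) 3 - 3 * Nat.choose (n + 1) 2 + n :=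
  stmt_17_general n
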